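/- arXiv:2103.09594 — 2 statements merged into one kernel-verified Lean document; each statement's English description precedes it below -/
import Mathlib

section
/- Let (a_n)_{n≥1} be a sequence of complex numbers and (X_n)_{n≥1} a sequence of complex-valued random variables with E(|X_n|^2) = 1 for all n. If N = 2^r for some integer r ≥ 1 and S_N* = max_{1 ≤ j ≤ N} |Σ_{n=1}^j a_n X_n|, then E( (S_N*)² ) ≤ (1 + log₂ N)² · Σ_{n,m=1}^N |a_n| |a_m| |E(X_n · conj(X_m))|. -/
/-!
Round `j ≤ 2^r` down successively to multiples of `2, 4, …, 2^(r+1)`: each step removes from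
`(0, j]` either nothing or one dyadic interval `(i 2^k, (i + 1) 2^k] ⊆ (0, 2^r]` (according to the
`k`-th binary digit of `j`), so `S_j` is a sum of at most one block sum `S_I` per level `k ≤ r`.
Cauchy–Schwarz over the `r + 1` levels bounds `|S_j|²`, uniformly in `j`, by `r + 1` times the sum
of `|S_I|²` over all dyadic intervals `I ⊆ (0, 2^r]`. Expanding the square gives
`E|S_I|² ≤ ∑_{n,m ∈ I} |a_n| |a_m| |E(X_n conj X_m)|`, and since the intervals of one level are
disjoint, each of the `r + 1` levels contributes at most the full double sum over `(0, 2^r]`.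
-/

open MeasureTheory Filter
open Finset
open scoped ComplexConjugate

lemma lt_pow_sub_iff_succ_mul_pow_le {b i k r : ℕ} (hb : 0 < b) (hk : k ≤ r) :
    i < b ^ (r - k) ↔ (i + 1) * b ^ k ≤ b ^ r := by
  rw [← pow_sub_mul_pow b hk, Nat.mul_le_mul_right_iff (pow_pos hb k)]
  omega

lemma sum_sum_sum_le_of_pairwiseDisjoint {ι α M : Type*} [AddCommMonoid M] [PartialOrder M]
    [IsOrderedAddMonoid M] {I : Finset ι} {s : ι → Finset α} {t : Finset α}
    (hdisj : (I : Set ι).PairwiseDisjoint s) (hst : ∀ i ∈ I, s i ⊆ t) {c : α → α → M}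
    (hc : ∀ n m, 0 ≤ c n m) :
    ∑ i ∈ I, ∑ n ∈ s i, ∑ m ∈ s i, c n m ≤ ∑ n ∈ t, ∑ m ∈ t, c n m := by
  classical
  calc ∑ i ∈ I, ∑ n ∈ s i, ∑ m ∈ s i, c n m
      ≤ ∑ i ∈ I, ∑ n ∈ s i, ∑ m ∈ t, c n m :=
        sum_le_sum fun i hi => sum_le_sum fun n _ =>
          sum_le_sum_of_subset_of_nonneg (hst i hi) fun m _ _ => hc n m
    _ = ∑ n ∈ I.biUnion s, ∑ m ∈ t, c n m := (sum_biUnion hdisj).symm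
    _ ≤ ∑ n ∈ t, ∑ m ∈ t, c n m :=
        sum_le_sum_of_subset_of_nonneg (biUnion_subset.2 hst) fun n _ _ =>
          sum_nonneg fun m _ => hc n m

lemma sum_range_sum_Ioc_of_antitone {M : Type*} [AddCommMonoid M] (u : ℕ → M) {c : ℕ → ℕ}
    (hc : Antitone c) (K : ℕ) :
    ∑ k ∈ range K, ∑ n ∈ Ioc (c (k + 1)) (c k), u n = ∑ n ∈ Ioc (c K) (c 0), u n := by
  induction K with
  | zero => simp
  | succ K ih =>
    rw [sum_range_succ, ih, add_comm, sum_Ioc_consecutive _ (hc K.le_succ) (hc K.zero_le)]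

lemma div_two_pow_succ_mul_two_pow_succ (j k : ℕ) :
    j / 2 ^ (k + 1) * 2 ^ (k + 1) = j / 2 ^ k / 2 * 2 * 2 ^ k := by
  rw [pow_succ, Nat.div_div_eq_div_mul, mul_assoc, mul_comm 2]

def dyadicBlock (k i : ℕ) : Finset ℕ := Ioc (i * 2 ^ k) ((i + 1) * 2 ^ k)

open Function in
lemma pairwise_disjoint_dyadicBlock (k : ℕ) : Pairwise (Disjoint on dyadicBlock k) :=
  (pairwise_disjoint_on _).2 fun _ _ hlt =>
    Ioc_disjoint_Ioc_of_le (Nat.mul_le_mul_right _ hlt)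

lemma dyadicBlock_subset_Icc {k i r : ℕ} (hk : k ≤ r) (hi : i < 2 ^ (r - k)) :
    dyadicBlock k i ⊆ Icc 1 (2 ^ r) := fun n hn => by
  rw [dyadicBlock, mem_Ioc] at hn
  exact mem_Icc.2 ⟨by omega, hn.2.trans ((lt_pow_sub_iff_succ_mul_pow_le two_pos hk).1 hi)⟩

lemma sum_dyadicBlock_sum_sum_le {M : Type*} [AddCommMonoid M] [PartialOrder M]
    [IsOrderedAddMonoid M] {k r : ℕ} (hk : k ≤ r) {c : ℕ → ℕ → M} (hc : ∀ n m, 0 ≤ c n m) :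
    ∑ i ∈ range (2 ^ (r - k)), ∑ n ∈ dyadicBlock k i, ∑ m ∈ dyadicBlock k i, c n m ≤
      ∑ n ∈ Icc 1 (2 ^ r), ∑ m ∈ Icc 1 (2 ^ r), c n m :=
  sum_sum_sum_le_of_pairwiseDisjoint ((pairwise_disjoint_dyadicBlock k).set_pairwise _)
    (fun _ hi => dyadicBlock_subset_Icc hk (mem_range.1 hi)) hc

lemma Ioc_div_two_pow_succ_mul_eq (j k : ℕ) :
    Ioc (j / 2 ^ (k + 1) * 2 ^ (k + 1)) (j / 2 ^ k * 2 ^ k) = ∅ ∨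
      ∃ i, (i + 1) * 2 ^ k ≤ j ∧
        Ioc (j / 2 ^ (k + 1) * 2 ^ (k + 1)) (j / 2 ^ k * 2 ^ k) = dyadicBlock k i := by
  rw [div_two_pow_succ_mul_two_pow_succ]
  rcases Nat.even_or_odd' (j / 2 ^ k) with ⟨q, hq' | hq'⟩
  · left
    rw [hq', Nat.mul_div_cancel_left q two_pos, mul_comm q, Ioc_self]
  · right
    refine ⟨2 * q, ?_, ?_⟩
    · rw [← hq']
      exact Nat.div_mul_le_self j _
    · rw [dyadicBlock, hq', Nat.mul_add_div two_pos, Nat.div_eq_of_lt one_lt_two, add_zero,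
        mul_comm q]

lemma sum_Icc_one_eq_sum_range_sum_Ioc {M : Type*} [AddCommMonoid M] (u : ℕ → M) {j r : ℕ}
    (hj : j < 2 ^ r) :
    ∑ n ∈ Icc 1 j, u n =
      ∑ k ∈ range r, ∑ n ∈ Ioc (j / 2 ^ (k + 1) * 2 ^ (k + 1)) (j / 2 ^ k * 2 ^ k), u n := by
  have hanti : Antitone fun k => j / 2 ^ k * 2 ^ k := antitone_nat_of_succ_le fun k => by
    rw [div_two_pow_succ_mul_two_pow_succ]
    exact Nat.mul_le_mul_right _ (Nat.div_mul_le_self _ 2)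
  rw [sum_range_sum_Ioc_of_antitone u hanti r]
  simp [Nat.div_eq_of_lt hj, ← Icc_add_one_left_eq_Ioc]

lemma norm_sum_Ioc_div_two_pow_sq_le {E : Type*} [SeminormedAddCommGroup E] (u : ℕ → E)
    {j k r : ℕ} (hk : k ≤ r) (hj : j ≤ 2 ^ r) :
    ‖∑ n ∈ Ioc (j / 2 ^ (k + 1) * 2 ^ (k + 1)) (j / 2 ^ k * 2 ^ k), u n‖ ^ 2 ≤
      ∑ i ∈ range (2 ^ (r - k)), ‖∑ n ∈ dyadicBlock k i, u n‖ ^ 2 := by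
  rcases Ioc_div_two_pow_succ_mul_eq j k with hempty | ⟨i, hij, hblock⟩
  · rw [hempty, sum_empty, norm_zero, zero_pow two_ne_zero]
    exact sum_nonneg fun _ _ => sq_nonneg _
  · rw [hblock]
    exact single_le_sum (f := fun i => ‖∑ n ∈ dyadicBlock k i, u n‖ ^ 2)
      (fun _ _ => sq_nonneg _)
      (mem_range.2 ((lt_pow_sub_iff_succ_mul_pow_le two_pos hk).2 (hij.trans hj)))

def dyadicSquareSum {E : Type*} [SeminormedAddCommGroup E] (r : ℕ) (u : ℕ → E) : ℝ :=
  ∑ k ∈ range (r + 1), ∑ i ∈ range (2 ^ (r - k)), ‖∑ n ∈ dyadicBlock k i, u n‖ ^ 2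

lemma dyadicSquareSum_nonneg {E : Type*} [SeminormedAddCommGroup E] (r : ℕ) (u : ℕ → E) :
    0 ≤ dyadicSquareSum r u :=
  sum_nonneg fun _ _ => sum_nonneg fun _ _ => sq_nonneg _

lemma norm_sum_Icc_sq_le_dyadicSquareSum {E : Type*} [SeminormedAddCommGroup E] (u : ℕ → E)
    {j r : ℕ} (hj : j ≤ 2 ^ r) :
    ‖∑ n ∈ Icc 1 j, u n‖ ^ 2 ≤ (r + 1) * dyadicSquareSum r u := by
  rw [sum_Icc_one_eq_sum_range_sum_Ioc u (hj.trans_lt (Nat.pow_lt_pow_succ one_lt_two))]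
  set T := fun k => ∑ n ∈ Ioc (j / 2 ^ (k + 1) * 2 ^ (k + 1)) (j / 2 ^ k * 2 ^ k), u n
  calc ‖∑ k ∈ range (r + 1), T k‖ ^ 2 ≤ (∑ k ∈ range (r + 1), ‖T k‖) ^ 2 := by
        gcongr; exact norm_sum_le _ _
    _ ≤ (r + 1) * ∑ k ∈ range (r + 1), ‖T k‖ ^ 2 := by
        simpa using sq_sum_le_card_mul_sum_sq (s := range (r + 1)) (f := fun k => ‖T k‖)
    _ ≤ (r + 1) * dyadicSquareSum r u := by
        rw [dyadicSquareSum]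
        gcongr with k hk
        exact norm_sum_Ioc_div_two_pow_sq_le u (mem_range_succ_iff.1 hk) hj

lemma sq_sup'_norm_sum_Icc_le_dyadicSquareSum {E : Type*} [SeminormedAddCommGroup E]
    (u : ℕ → E) (r : ℕ) (hne : (Icc 1 (2 ^ r)).Nonempty) :
    ((Icc 1 (2 ^ r)).sup' hne fun j => ‖∑ n ∈ Icc 1 j, u n‖) ^ 2 ≤
      (r + 1) * dyadicSquareSum r u := by
  obtain ⟨j, hj, hsup⟩ := exists_mem_eq_sup' hne fun j => ‖∑ n ∈ Icc 1 j, u n‖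
  rw [hsup]
  exact norm_sum_Icc_sq_le_dyadicSquareSum u (mem_Icc.1 hj).2

section L2

variable {Ω ι 𝕜 : Type*} [MeasurableSpace Ω] {μ : Measure Ω} [RCLike 𝕜]

lemma integrable_norm_sum_mul_sq (s : Finset ι) (a : ι → 𝕜) {X : ι → Ω → 𝕜}
    (hX : ∀ i ∈ s, MemLp (X i) 2 μ) :
    Integrable (fun ω => ‖∑ i ∈ s, a i * X i ω‖ ^ 2) μ := by
  have hsum : MemLp (fun ω => ∑ i ∈ s, a i * X i ω) 2 μ :=
    memLp_finsetSum s fun i hi => (hX i hi).const_mul (a i)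
  exact (memLp_two_iff_integrable_sq_norm hsum.1).1 hsum

lemma integral_norm_sum_mul_sq_le (s : Finset ι) (a : ι → 𝕜) {X : ι → Ω → 𝕜}
    (hX : ∀ i ∈ s, MemLp (X i) 2 μ) :
    ∫ ω, ‖∑ i ∈ s, a i * X i ω‖ ^ 2 ∂μ ≤
      ∑ i ∈ s, ∑ j ∈ s, ‖a i‖ * ‖a j‖ * ‖∫ ω, X i ω * conj (X j ω) ∂μ‖ := by
  have hint : ∀ i ∈ s, ∀ j ∈ s, Integrable (fun ω => X i ω * conj (X j ω)) μ :=
    fun i hi j hj => (hX i hi).integrable_mul (hX j hj).star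
  have hexpand : ∀ ω, ((‖∑ i ∈ s, a i * X i ω‖ ^ 2 : ℝ) : 𝕜) =
      ∑ i ∈ s, ∑ j ∈ s, a i * conj (a j) * (X i ω * conj (X j ω)) := fun ω => by
    rw [RCLike.ofReal_pow, ← RCLike.mul_conj, map_sum, sum_mul_sum]
    refine sum_congr rfl fun i _ => sum_congr rfl fun j _ => ?_
    rw [map_mul]
    ring
  calc ∫ ω, ‖∑ i ∈ s, a i * X i ω‖ ^ 2 ∂μ
      = ‖((∫ ω, ‖∑ i ∈ s, a i * X i ω‖ ^ 2 ∂μ : ℝ) : 𝕜)‖ := by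
        rw [RCLike.norm_ofReal, abs_of_nonneg (integral_nonneg fun ω => sq_nonneg _)]
    _ = ‖∑ i ∈ s, ∑ j ∈ s, a i * conj (a j) * ∫ ω, X i ω * conj (X j ω) ∂μ‖ := by
        rw [← integral_ofReal, integral_congr_ae (Eventually.of_forall hexpand),
          integral_finsetSum _ fun i hi => integrable_finsetSum _ fun j hj =>
            (hint i hi j hj).const_mul _]
        refine congrArg _ (sum_congr rfl fun i hi => ?_)
        rw [integral_finsetSum _ fun j hj => (hint i hi j hj).const_mul _]
        exact sum_congr rfl fun j _ => integral_const_mul _ _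
    _ ≤ ∑ i ∈ s, ∑ j ∈ s, ‖a i * conj (a j) * ∫ ω, X i ω * conj (X j ω) ∂μ‖ :=
        (norm_sum_le _ _).trans (sum_le_sum fun i _ => norm_sum_le _ _)
    _ = ∑ i ∈ s, ∑ j ∈ s, ‖a i‖ * ‖a j‖ * ‖∫ ω, X i ω * conj (X j ω) ∂μ‖ := by
        simp only [norm_mul, RCLike.norm_conj]

lemma integrable_dyadicSquareSum (a : ℕ → 𝕜) {X : ℕ → Ω → 𝕜} {r : ℕ}
    (hX : ∀ n ∈ Icc 1 (2 ^ r), MemLp (X n) 2 μ) :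
    Integrable (fun ω => dyadicSquareSum r fun n => a n * X n ω) μ :=
  integrable_finsetSum _ fun _ hk => integrable_finsetSum _ fun _ hi =>
    integrable_norm_sum_mul_sq _ a fun n hn =>
      hX n (dyadicBlock_subset_Icc (mem_range_succ_iff.1 hk) (mem_range.1 hi) hn)

lemma integral_dyadicSquareSum_le (a : ℕ → 𝕜) {X : ℕ → Ω → 𝕜} {r : ℕ}
    (hX : ∀ n ∈ Icc 1 (2 ^ r), MemLp (X n) 2 μ) :
    ∫ ω, dyadicSquareSum r (fun n => a n * X n ω) ∂μ ≤
      (r + 1) * ∑ n ∈ Icc 1 (2 ^ r), ∑ m ∈ Icc 1 (2 ^ r),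
        ‖a n‖ * ‖a m‖ * ‖∫ ω, X n ω * conj (X m ω) ∂μ‖ := by
  have hblock : ∀ k ∈ range (r + 1), ∀ i ∈ range (2 ^ (r - k)), ∀ n ∈ dyadicBlock k i,
      MemLp (X n) 2 μ := fun k hk i hi n hn =>
    hX n (dyadicBlock_subset_Icc (mem_range_succ_iff.1 hk) (mem_range.1 hi) hn)
  calc ∫ ω, dyadicSquareSum r (fun n => a n * X n ω) ∂μ
      = ∑ k ∈ range (r + 1), ∑ i ∈ range (2 ^ (r - k)),
          ∫ ω, ‖∑ n ∈ dyadicBlock k i, a n * X n ω‖ ^ 2 ∂μ := by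
        simp only [dyadicSquareSum]
        rw [integral_finsetSum _ fun k hk => integrable_finsetSum _ fun i hi =>
          integrable_norm_sum_mul_sq _ a (hblock k hk i hi)]
        refine sum_congr rfl fun k hk => ?_
        exact integral_finsetSum _ fun i hi => integrable_norm_sum_mul_sq _ a (hblock k hk i hi)
    _ ≤ ∑ k ∈ range (r + 1), ∑ i ∈ range (2 ^ (r - k)),
          ∑ n ∈ dyadicBlock k i, ∑ m ∈ dyadicBlock k i,
            ‖a n‖ * ‖a m‖ * ‖∫ ω, X n ω * conj (X m ω) ∂μ‖ :=
        sum_le_sum fun k hk => sum_le_sum fun i hi =>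
          integral_norm_sum_mul_sq_le _ a (hblock k hk i hi)
    _ ≤ ∑ _k ∈ range (r + 1), ∑ n ∈ Icc 1 (2 ^ r), ∑ m ∈ Icc 1 (2 ^ r),
          ‖a n‖ * ‖a m‖ * ‖∫ ω, X n ω * conj (X m ω) ∂μ‖ :=
        sum_le_sum fun k hk => sum_dyadicBlock_sum_sum_le (mem_range_succ_iff.1 hk)
          fun _ _ => by positivity
    _ = _ := by rw [sum_const, card_range, nsmul_eq_mul, Nat.cast_succ]

end L2

theorem menshov_rademacher_maximal_inequality_dyadic_general
    {Ω : Type*} [MeasurableSpace Ω] (P : Measure Ω)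
    (a : ℕ → ℂ) (X : ℕ → Ω → ℂ)
    (hmeas : ∀ n, 1 ≤ n → AEMeasurable (X n) P)
    (hnorm : ∀ n, 1 ≤ n → ∫ ω, ‖X n ω‖ ^ 2 ∂P = 1)
    (r N : ℕ) (hN : N = 2 ^ r) (hN0 : 0 < N) :
    ∫⁻ ω, ENNReal.ofReal
        (((Finset.Icc 1 N).sup' (Finset.nonempty_Icc.mpr hN0)
          (fun j => ‖∑ n ∈ Finset.Icc 1 j, a n * X n ω‖)) ^ 2) ∂P ≤
      ENNReal.ofReal ((1 + Real.logb 2 N) ^ 2 *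
        ∑ n ∈ Finset.Icc 1 N, ∑ m ∈ Finset.Icc 1 N,
          ‖a n‖ * ‖a m‖ * ‖∫ ω, X n ω * (starRingEnd ℂ) (X m ω) ∂P‖) := by
  subst hN
  have hX : ∀ n ∈ Icc 1 (2 ^ r), MemLp (X n) 2 P := fun n hn =>
    have hn : 1 ≤ n := (mem_Icc.1 hn).1
    (memLp_two_iff_integrable_sq_norm (hmeas n hn).aestronglyMeasurable).2
      (Integrable.of_integral_ne_zero (by rw [hnorm n hn]; exact one_ne_zero))
  have hlog : 1 + Real.logb 2 ((2 ^ r : ℕ) : ℝ) = r + 1 := by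
    rw [Nat.cast_pow, Real.logb_pow, Nat.cast_ofNat, Real.logb_self_eq_one one_lt_two, mul_one,
      add_comm]
  calc _ ≤ ∫⁻ ω, ENNReal.ofReal ((r + 1) * dyadicSquareSum r (fun n => a n * X n ω)) ∂P :=
        lintegral_mono fun ω => ENNReal.ofReal_le_ofReal
          (sq_sup'_norm_sum_Icc_le_dyadicSquareSum _ r _)
    _ = ENNReal.ofReal (∫ ω, (r + 1) * dyadicSquareSum r (fun n => a n * X n ω) ∂P) :=
        (ofReal_integral_eq_lintegral_ofReal ((integrable_dyadicSquareSum a hX).const_mul _)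
          (Eventually.of_forall fun _ =>
            mul_nonneg (by positivity) (dyadicSquareSum_nonneg _ _))).symm
    _ ≤ _ := by
        rw [integral_const_mul, hlog, sq, mul_assoc]
        gcongr
        exact integral_dyadicSquareSum_le a hX

/-- **Menshov–Rademacher maximal inequality, dyadic case.** If `N = 2^r` with `r ≥ 1`, then
for `S_N* = max_{1 ≤ j ≤ N} |Σ_{n=1}^j a_n X_n|` one has
`E((S_N*)²) ≤ (1 + log₂ N)² Σ_{n,m=1}^N |a_n||a_m||E(X_n conj(X_m))|`. -/
theorem menshov_rademacher_maximal_inequality_dyadic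
    {Ω : Type*} [MeasurableSpace Ω] (P : Measure Ω) [IsProbabilityMeasure P]
    (a : ℕ → ℂ) (X : ℕ → Ω → ℂ)
    (hmeas : ∀ n, 1 ≤ n → AEMeasurable (X n) P)
    (hnorm : ∀ n, 1 ≤ n → ∫ ω, ‖X n ω‖ ^ 2 ∂P = 1)
    (r N : ℕ) (hr : 1 ≤ r) (hN : N = 2 ^ r) (hN0 : 0 < N) :
    ∫⁻ ω, ENNReal.ofReal
        (((Finset.Icc 1 N).sup' (Finset.nonempty_Icc.mpr hN0)
          (fun j => ‖∑ n ∈ Finset.Icc 1 j, a n * X n ω‖)) ^ 2) ∂P ≤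
      ENNReal.ofReal ((1 + Real.logb 2 N) ^ 2 *
        ∑ n ∈ Finset.Icc 1 N, ∑ m ∈ Finset.Icc 1 N,
          ‖a n‖ * ‖a m‖ * ‖∫ ω, X n ω * (starRingEnd ℂ) (X m ω) ∂P‖) :=
  menshov_rademacher_maximal_inequality_dyadic_general P a X hmeas hnorm r N hN hN0
end

section
/- Let μ be a Borel probability measure on the circle 𝕋 = ℝ/ℤ and let (a_n)_{n∈ℤ} be complex numbers. If Σ_{n,m∈ℤ} |a_n| |a_m| |μ̂(n−m)| · log₂(|n|+1) · log₂(|m|+1) < ∞, then the two-sided trigonometric series Σ_{n∈ℤ} a_n exp(2πinx) converges μ-almost everywhere on 𝕋, in the sense that the symmetric partial sums Σ_{|n|≤N} a_n exp(2πinx) converge in ℂ as N → ∞ for μ-almost every x ∈ 𝕋. -/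
/-!
Rademacher–Menshov argument. Let `S_N` be the symmetric partial sums and `q_κ` the part of the
double series over `2^κ < |n|, |m| ≤ 2^(κ+1)`, where both logarithmic weights are at least `κ`.
Since `∫ |∑_{n ∈ G} a_n e_n|² dμ ≤ ∑_{n, m ∈ G} |a_n| |a_m| |μ̂(n - m)|`, every increment of
`S` inside the block `[2^κ, 2^(κ+1)]` satisfies `κ² ∫ |S_N - S_M|² ≤ q(M, N)`, and `q` is
superadditive. Summing over the `κ + 1` levels of dyadic subintervals of the block gives
`κ² ∫ E_κ ≤ (κ + 1) q_κ` for the dyadic energy `E_κ` of the block. As `∑ q_κ < ∞`, almost surely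
`∑ κ² |S_{2^(κ+1)} - S_{2^κ}|² < ∞` and `∑ (κ + 1) E_κ < ∞`. The first makes `S_{2^κ}` converge,
and the Rademacher–Menshov inequality `|S_N - S_{2^κ}|² ≤ (κ + 1) E_κ` for `N` in the block
controls the oscillation between consecutive powers of two.
-/

open MeasureTheory Filter
open scoped ENNReal Topology ComplexConjugate

section DyadicEnergy

variable {E : Type*} [SeminormedAddCommGroup E]

/-- The sum of `‖s b - s a‖ ^ 2` over all dyadic intervals `[a, b]` contained in
`[m * 2 ^ i, (m + 1) * 2 ^ i]`. -/
def dyadicEnergy (s : ℕ → E) : ℕ → ℕ → ℝ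
  | 0, m => ‖s (m + 1) - s m‖ ^ 2
  | i + 1, m => dyadicEnergy s i (2 * m) + dyadicEnergy s i (2 * m + 1) +
      ‖s ((m + 1) * 2 ^ (i + 1)) - s (m * 2 ^ (i + 1))‖ ^ 2

theorem dyadicEnergy_nonneg (s : ℕ → E) (i m : ℕ) : 0 ≤ dyadicEnergy s i m := by
  induction i generalizing m with
  | zero => exact sq_nonneg _
  | succ i ih =>
    have := ih (2 * m)
    have := ih (2 * m + 1)
    simp only [dyadicEnergy]
    positivity

theorem norm_sub_sq_le_dyadicEnergy (s : ℕ → E) (i m : ℕ) :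
    ‖s ((m + 1) * 2 ^ i) - s (m * 2 ^ i)‖ ^ 2 ≤ dyadicEnergy s i m := by
  cases i with
  | zero => simp [dyadicEnergy]
  | succ i =>
    have := dyadicEnergy_nonneg s i (2 * m)
    have := dyadicEnergy_nonneg s i (2 * m + 1)
    simp only [dyadicEnergy]
    linarith

/-- The Rademacher–Menshov inequality. -/
theorem norm_sub_sq_le_succ_mul_dyadicEnergy (s : ℕ → E) (i m r : ℕ) (hr : r ≤ 2 ^ i) :
    ‖s (m * 2 ^ i + r) - s (m * 2 ^ i)‖ ^ 2 ≤ (i + 1) * dyadicEnergy s i m := by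
  induction i generalizing m r with
  | zero =>
    interval_cases r
    · simp [dyadicEnergy_nonneg]
    · simp [dyadicEnergy]
  | succ i ih =>
    have hE : dyadicEnergy s i (2 * m) + dyadicEnergy s i (2 * m + 1) ≤
        dyadicEnergy s (i + 1) m := by
      simp only [dyadicEnergy]
      linarith [sq_nonneg ‖s ((m + 1) * 2 ^ (i + 1)) - s (m * 2 ^ (i + 1))‖]
    have h₀ := dyadicEnergy_nonneg s i (2 * m)
    have h₁ := dyadicEnergy_nonneg s i (2 * m + 1)
    push_cast
    rw [show m * 2 ^ (i + 1) = 2 * m * 2 ^ i by ring]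
    rcases le_or_gt r (2 ^ i) with hr' | hr'
    · calc _ ≤ (i + 1) * dyadicEnergy s i (2 * m) := ih (2 * m) r hr'
        _ ≤ (i + 1 + 1) * dyadicEnergy s (i + 1) m := by gcongr <;> linarith
    · -- split at the midpoint: the left half is a full node, the right half an initial segment
      have hsplit : 2 * m * 2 ^ i + r = (2 * m + 1) * 2 ^ i + (r - 2 ^ i) := by
        rw [pow_succ] at hr; ring_nf; omega
      have hY := norm_sub_sq_le_dyadicEnergy s i (2 * m)
      have hX := ih (2 * m + 1) (r - 2 ^ i) (by rw [pow_succ] at hr; omega)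
      rw [hsplit, ← sub_add_sub_cancel _ (s ((2 * m + 1) * 2 ^ i))]
      set X := s ((2 * m + 1) * 2 ^ i + (r - 2 ^ i)) - s ((2 * m + 1) * 2 ^ i)
      set Y := s ((2 * m + 1) * 2 ^ i) - s (2 * m * 2 ^ i)
      have hsum : ‖X‖ ^ 2 + (i + 1) * ‖Y‖ ^ 2 ≤ (i + 1) * dyadicEnergy s (i + 1) m := by
        nlinarith
      refine le_of_mul_le_mul_left ?_ (by positivity : (0 : ℝ) < i + 1)
      calc (i + 1) * ‖X + Y‖ ^ 2 ≤ (i + 1) * (‖X‖ + ‖Y‖) ^ 2 := by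
            gcongr; exact norm_add_le X Y
        -- `c (x + y)² ≤ (c + 1) (x² + c y²)` is `(x - c y)² ≥ 0`
        _ ≤ (i + 1 + 1) * (‖X‖ ^ 2 + (i + 1) * ‖Y‖ ^ 2) := by
          nlinarith [sq_nonneg (‖X‖ - (i + 1) * ‖Y‖)]
        _ ≤ (i + 1) * ((i + 1 + 1) * dyadicEnergy s (i + 1) m) := by nlinarith

variable {X : Type*} [MeasurableSpace X] {μ : Measure X}

theorem integrable_dyadicEnergy {s : ℕ → X → E}
    (hs : ∀ M N, Integrable (fun x => ‖s N x - s M x‖ ^ 2) μ) (i m : ℕ) :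
    Integrable (fun x => dyadicEnergy (s · x) i m) μ := by
  induction i generalizing m with
  | zero => exact hs _ _
  | succ i ih => exact ((ih _).add (ih _)).add (hs _ _)

theorem mul_integral_dyadicEnergy_le {s : ℕ → X → E} {φ : ℕ → ℕ → ℝ} (c : ℝ)
    (hs : ∀ M N, Integrable (fun x => ‖s N x - s M x‖ ^ 2) μ)
    (hφ : ∀ M K N, M ≤ K → K ≤ N → φ M K + φ K N ≤ φ M N) (i m : ℕ)
    (hnode : ∀ M N, m * 2 ^ i ≤ M → M ≤ N → N ≤ (m + 1) * 2 ^ i →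
      c * ∫ x, ‖s N x - s M x‖ ^ 2 ∂μ ≤ φ M N) :
    c * ∫ x, dyadicEnergy (s · x) i m ∂μ ≤ (i + 1) * φ (m * 2 ^ i) ((m + 1) * 2 ^ i) := by
  induction i generalizing m with
  | zero => simpa [dyadicEnergy] using hnode m (m + 1) (by simp) (by simp) (by simp)
  | succ i ih =>
    have hpow : ∀ k, k * 2 ^ (i + 1) = 2 * k * 2 ^ i := fun k => by ring
    have hend : (2 * m + 1 + 1) * 2 ^ i = (m + 1) * 2 ^ (i + 1) := by ring
    have hleft := ih (2 * m) fun M N hM hMN hN =>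
      hnode M N (by rw [hpow]; exact hM) hMN (by rw [hpow]; nlinarith)
    have hright := ih (2 * m + 1) fun M N hM hMN hN =>
      hnode M N (by rw [hpow]; nlinarith) hMN (by rw [hpow]; linarith)
    have htop := hnode (m * 2 ^ (i + 1)) ((m + 1) * 2 ^ (i + 1)) le_rfl
      (by gcongr; omega) le_rfl
    have hsup := hφ (2 * m * 2 ^ i) ((2 * m + 1) * 2 ^ i) ((2 * m + 1 + 1) * 2 ^ i)
      (by gcongr; omega) (by gcongr; omega)
    rw [← hpow] at hleft hsup
    rw [hend] at hright hsup
    simp only [dyadicEnergy]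
    rw [integral_add ?_ (hs _ _),
      integral_add (integrable_dyadicEnergy hs _ _) (integrable_dyadicEnergy hs _ _)]
    · push_cast
      nlinarith
    · exact (integrable_dyadicEnergy hs _ _).add (integrable_dyadicEnergy hs _ _)

end DyadicEnergy

theorem exists_tendsto_of_summable_of_tendsto_dyadicEnergy {E : Type*} [NormedAddCommGroup E]
    [CompleteSpace E] {s : ℕ → E} (hd : Summable fun κ => ‖s (2 ^ (κ + 1)) - s (2 ^ κ)‖)
    (hE : Tendsto (fun κ : ℕ => ((κ : ℝ) + 1) * dyadicEnergy s κ 1) atTop (𝓝 0)) :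
    ∃ l, Tendsto s atTop (𝓝 l) := by
  obtain ⟨l, hl⟩ := cauchySeq_tendsto_of_complete
    (cauchySeq_of_summable_dist (f := fun κ => s (2 ^ κ)) (by simpa [dist_eq_norm'] using hd))
  have hlog : Tendsto (Nat.log 2) atTop atTop :=
    tendsto_atTop_atTop_of_monotone Nat.log_monotone fun κ =>
      ⟨2 ^ κ, (Nat.log_pow one_lt_two κ).ge⟩
  have hosc : Tendsto (fun N => s N - s (2 ^ Nat.log 2 N)) atTop (𝓝 0) := by
    refine squeeze_zero_norm' ?_ (by simpa using (hE.comp hlog).sqrt)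
    filter_upwards [eventually_ne_atTop 0] with N hN
    have hlow := Nat.pow_log_le_self 2 hN
    have hup := Nat.lt_pow_succ_log_self one_lt_two N
    have h := norm_sub_sq_le_succ_mul_dyadicEnergy s (Nat.log 2 N) 1 (N - 2 ^ Nat.log 2 N)
      (by rw [Nat.pow_succ] at hup; omega)
    rw [one_mul, Nat.add_sub_cancel' hlow] at h
    exact Real.le_sqrt_of_sq_le h
  exact ⟨l, by simpa using (hl.comp hlog).add hosc⟩

theorem summable_of_summable_natCast_sq_mul_sq {f : ℕ → ℝ}
    (hf : Summable fun k : ℕ => (k : ℝ) ^ 2 * f k ^ 2) : Summable f := by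
  refine (hf.add (Real.summable_nat_pow_inv.2 one_lt_two)).of_norm_bounded_eventually_nat ?_
  filter_upwards [eventually_ge_atTop 1] with k hk
  have hinv : (k : ℝ) * (k : ℝ)⁻¹ = 1 := mul_inv_cancel₀ (by positivity)
  rw [Real.norm_eq_abs, ← sq_abs (f k), ← inv_pow]
  -- `2 |f| = 2 (k |f|) k⁻¹ ≤ (k |f|)² + k⁻²`
  nlinarith [sq_nonneg ((k : ℝ) * |f k| - (k : ℝ)⁻¹), abs_nonneg (f k)]

theorem Continuous.integrable_of_compactSpace {X F : Type*} [TopologicalSpace X] [CompactSpace X]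
    [MeasurableSpace X] [OpensMeasurableSpace X] [NormedAddCommGroup F] {μ : Measure X}
    [IsFiniteMeasure μ] {f : X → F} (hf : Continuous f) : Integrable f μ :=
  hf.integrable_of_hasCompactSupport (HasCompactSupport.of_compactSpace f)

theorem ae_summable_of_summable_integral {X : Type*} [MeasurableSpace X] {μ : Measure X}
    {f : ℕ → X → ℝ} (hf : ∀ k x, 0 ≤ f k x) (hi : ∀ k, Integrable (f k) μ)
    (hs : Summable fun k => ∫ x, f k x ∂μ) : ∀ᵐ x ∂μ, Summable fun k => f k x := by
  have heLp : ∀ k, eLpNorm (f k) 1 μ = ENNReal.ofReal (∫ x, f k x ∂μ) := fun k => by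
    rw [eLpNorm_one_eq_lintegral_enorm,
      ofReal_integral_eq_lintegral_ofReal (hi k) (ae_of_all _ (hf k))]
    simp_rw [Real.enorm_of_nonneg (hf k _)]
  have hfin : ∑' k, eLpNorm (f k) 1 μ ≠ ∞ := by
    simp_rw [heLp]
    rw [← ENNReal.ofReal_tsum_of_nonneg (fun k => integral_nonneg (hf k)) hs]
    exact ENNReal.ofReal_ne_top
  filter_upwards [summable_norm_of_tsum_eLpNorm_ne_top le_rfl
    (fun k => (hi k).aestronglyMeasurable) hfin] with x hx
  simpa [Real.norm_of_nonneg (hf _ x)] using hx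

noncomputable def annulus (M N : ℕ) : Finset ℤ := Finset.Icc (-(N : ℤ)) N \ Finset.Icc (-(M : ℤ)) M

theorem mem_annulus {M N : ℕ} {n : ℤ} : n ∈ annulus M N ↔ M < n.natAbs ∧ n.natAbs ≤ N := by
  simp only [annulus, Finset.mem_sdiff, Finset.mem_Icc]
  omega

theorem disjoint_annulus {M N M' N' : ℕ} (h : N ≤ M') : Disjoint (annulus M N) (annulus M' N') :=
  Finset.disjoint_left.2 fun n hn hn' => by rw [mem_annulus] at hn hn'; omega

noncomputable def annulusMass (t : ℤ × ℤ → ℝ) (M N : ℕ) : ℝ :=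
  ∑ p ∈ annulus M N ×ˢ annulus M N, t p

theorem annulusMass_add_le {t : ℤ × ℤ → ℝ} (ht : 0 ≤ t) {M K N : ℕ} (hMK : M ≤ K)
    (hKN : K ≤ N) : annulusMass t M K + annulusMass t K N ≤ annulusMass t M N := by
  rw [annulusMass, annulusMass,
    ← Finset.sum_union (Finset.disjoint_product.2 (Or.inl (disjoint_annulus le_rfl)))]
  refine Finset.sum_le_sum_of_subset_of_nonneg (fun p => ?_) fun p _ _ => ht p
  simp only [Finset.mem_union, Finset.mem_product, mem_annulus]
  omega

theorem summable_annulusMass_two_pow {t : ℤ × ℤ → ℝ} (ht : 0 ≤ t) (hs : Summable t) :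
    Summable fun κ : ℕ => annulusMass t (2 ^ κ) (2 ^ (κ + 1)) := by
  have hdisj : Pairwise (Function.onFun Disjoint fun κ : ℕ =>
      annulus (2 ^ κ) (2 ^ (κ + 1)) ×ˢ annulus (2 ^ κ) (2 ^ (κ + 1))) :=
    (pairwise_disjoint_on _).2 fun κ κ' h => Finset.disjoint_product.2 (Or.inl
      (disjoint_annulus (Nat.pow_le_pow_right two_pos h)))
  refine summable_of_sum_le (c := ∑' p, t p) (fun κ => Finset.sum_nonneg fun p _ => ht p)
    fun S => ?_
  simp only [annulusMass]
  rw [← Finset.sum_biUnion (hdisj.set_pairwise _)]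
  exact hs.sum_le_tsum _ fun p _ => ht p

theorem logb_abs_add_one_nonneg (n : ℤ) : 0 ≤ Real.logb 2 (|(n : ℝ)| + 1) :=
  Real.logb_nonneg one_lt_two (by linarith [abs_nonneg (n : ℝ)])

theorem natCast_le_logb_abs_add_one {κ : ℕ} {n : ℤ} (h : 2 ^ κ ≤ n.natAbs) :
    (κ : ℝ) ≤ Real.logb 2 (|(n : ℝ)| + 1) := by
  rw [Real.le_logb_iff_rpow_le one_lt_two (by positivity), Real.rpow_natCast]
  have habs : ((n.natAbs : ℕ) : ℝ) = |(n : ℝ)| := by rw [Nat.cast_natAbs, Int.cast_abs]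
  have : ((2 ^ κ : ℕ) : ℝ) ≤ |(n : ℝ)| := habs ▸ by exact_mod_cast h
  push_cast at this
  linarith

section Fourier

variable (μ : Measure UnitAddCircle) (a : ℤ → ℂ)

noncomputable def symmPartialSum (N : ℕ) (x : UnitAddCircle) : ℂ :=
  ∑ n ∈ Finset.Icc (-(N : ℤ)) N, a n * fourier n x

theorem continuous_symmPartialSum (N : ℕ) : Continuous (symmPartialSum a N) :=
  continuous_finsetSum _ fun n _ => continuous_const.mul (fourier n).continuous

theorem symmPartialSum_sub_symmPartialSum {M N : ℕ} (h : M ≤ N) (x : UnitAddCircle) :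
    symmPartialSum a N x - symmPartialSum a M x = ∑ n ∈ annulus M N, a n * fourier n x :=
  (Finset.sum_sdiff_eq_sub (Finset.Icc_subset_Icc (by omega) (by omega))).symm

noncomputable def weightedCorrelation (p : ℤ × ℤ) : ℝ :=
  ‖a p.1‖ * ‖a p.2‖ * ‖∫ x, fourier (-(p.1 - p.2)) x ∂μ‖ *
    Real.logb 2 (|(p.1 : ℝ)| + 1) * Real.logb 2 (|(p.2 : ℝ)| + 1)

theorem weightedCorrelation_nonneg : 0 ≤ weightedCorrelation μ a := fun p => by
  have := logb_abs_add_one_nonneg p.1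
  have := logb_abs_add_one_nonneg p.2
  unfold weightedCorrelation
  positivity

variable [IsFiniteMeasure μ]

theorem integral_norm_sum_fourier_sq_le (G : Finset ℤ) :
    ∫ x, ‖∑ n ∈ G, a n * fourier n x‖ ^ 2 ∂μ ≤
      ∑ n ∈ G, ∑ m ∈ G, ‖a n‖ * ‖a m‖ * ‖∫ x, fourier (-(n - m)) x ∂μ‖ := by
  have hexpand : ∀ x : UnitAddCircle, ((‖∑ n ∈ G, a n * fourier n x‖ ^ 2 : ℝ) : ℂ) =
      ∑ n ∈ G, ∑ m ∈ G, conj (a n) * a m * fourier (-(n - m)) x := fun x => by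
    rw [Complex.ofReal_pow, ← Complex.conj_mul', map_sum, Finset.sum_mul_sum]
    refine Finset.sum_congr rfl fun n _ => Finset.sum_congr rfl fun m _ => ?_
    rw [map_mul, ← fourier_neg, neg_sub, sub_eq_add_neg, fourier_add]
    ring
  have hint : ∀ (c : ℂ) (k : ℤ), Integrable (fun x => c * fourier k x) μ := fun c k =>
    (continuous_const.mul (fourier k).continuous).integrable_of_compactSpace
  calc ∫ x, ‖∑ n ∈ G, a n * fourier n x‖ ^ 2 ∂μ
      = ‖((∫ x, ‖∑ n ∈ G, a n * fourier n x‖ ^ 2 ∂μ : ℝ) : ℂ)‖ := by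
        rw [Complex.norm_real, Real.norm_of_nonneg (integral_nonneg fun x => by positivity)]
    _ = ‖∑ n ∈ G, ∑ m ∈ G, conj (a n) * a m * ∫ x, fourier (-(n - m)) x ∂μ‖ := by
        rw [← integral_complex_ofReal]
        simp_rw [hexpand]
        rw [integral_finsetSum _ fun n _ => integrable_finsetSum _ fun m _ => hint _ _]
        simp_rw [integral_finsetSum _ fun m _ => hint _ _, integral_const_mul]
    _ ≤ ∑ n ∈ G, ∑ m ∈ G, ‖a n‖ * ‖a m‖ * ‖∫ x, fourier (-(n - m)) x ∂μ‖ := by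
        refine (norm_sum_le _ _).trans (Finset.sum_le_sum fun n _ => (norm_sum_le _ _).trans ?_)
        simp

theorem sq_mul_integral_norm_sub_sq_le {κ M N : ℕ} (hκ : 2 ^ κ ≤ M) (hMN : M ≤ N) :
    (κ : ℝ) ^ 2 * ∫ x, ‖symmPartialSum a N x - symmPartialSum a M x‖ ^ 2 ∂μ ≤
      annulusMass (weightedCorrelation μ a) M N := by
  have hw : ∀ n ∈ annulus M N, (κ : ℝ) ≤ Real.logb 2 (|(n : ℝ)| + 1) := fun n hn =>
    natCast_le_logb_abs_add_one (by rw [mem_annulus] at hn; omega)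
  simp_rw [symmPartialSum_sub_symmPartialSum a hMN]
  calc _ ≤ (κ : ℝ) ^ 2 * ∑ n ∈ annulus M N, ∑ m ∈ annulus M N,
        ‖a n‖ * ‖a m‖ * ‖∫ x, fourier (-(n - m)) x ∂μ‖ := by
        gcongr; exact integral_norm_sum_fourier_sq_le μ a _
    _ = ∑ p ∈ annulus M N ×ˢ annulus M N,
        ‖a p.1‖ * ‖a p.2‖ * ‖∫ x, fourier (-(p.1 - p.2)) x ∂μ‖ * ((κ : ℝ) * κ) := by
        rw [Finset.sum_product, Finset.mul_sum]
        simp_rw [Finset.mul_sum]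
        ring_nf
    _ ≤ annulusMass (weightedCorrelation μ a) M N := by
        refine Finset.sum_le_sum fun p hp => ?_
        rw [Finset.mem_product] at hp
        rw [weightedCorrelation, mul_assoc _ (Real.logb _ _)]
        gcongr
        · exact logb_abs_add_one_nonneg _
        · exact hw _ hp.1
        · exact hw _ hp.2

theorem ae_summable_sq_mul_norm_sub_sq (hW : Summable (weightedCorrelation μ a)) :
    ∀ᵐ x ∂μ, Summable fun κ : ℕ =>
      (κ : ℝ) ^ 2 * ‖symmPartialSum a (2 ^ (κ + 1)) x - symmPartialSum a (2 ^ κ) x‖ ^ 2 := by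
  refine ae_summable_of_summable_integral (fun κ x => by positivity) (fun κ =>
    (((continuous_symmPartialSum a _).sub (continuous_symmPartialSum a _)).norm.pow 2
      |>.const_mul _).integrable_of_compactSpace) ?_
  refine (summable_annulusMass_two_pow (weightedCorrelation_nonneg μ a) hW).of_nonneg_of_le
    (fun κ => integral_nonneg fun x => by positivity) fun κ => ?_
  rw [integral_const_mul]
  exact sq_mul_integral_norm_sub_sq_le μ a le_rfl (Nat.pow_le_pow_right two_pos κ.le_succ)

theorem ae_summable_succ_mul_dyadicEnergy (hW : Summable (weightedCorrelation μ a)) :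
    ∀ᵐ x ∂μ, Summable fun κ : ℕ =>
      ((κ : ℝ) + 1) * dyadicEnergy (symmPartialSum a · x) κ 1 := by
  have hs : ∀ M N, Integrable (fun x => ‖symmPartialSum a N x - symmPartialSum a M x‖ ^ 2) μ :=
    fun M N => (((continuous_symmPartialSum a _).sub
      (continuous_symmPartialSum a _)).norm.pow 2).integrable_of_compactSpace
  refine ae_summable_of_summable_integral
    (fun κ x => mul_nonneg (by positivity) (dyadicEnergy_nonneg _ _ _))
    (fun κ => (integrable_dyadicEnergy hs κ 1).const_mul _) ?_
  refine ((summable_annulusMass_two_pow (weightedCorrelation_nonneg μ a) hW).mul_left 4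
    ).of_norm_bounded_eventually_nat ?_
  filter_upwards [eventually_ge_atTop 1] with κ hκ
  have h := mul_integral_dyadicEnergy_le ((κ : ℝ) ^ 2) hs
    (fun M K N => annulusMass_add_le (weightedCorrelation_nonneg μ a)) κ 1
    (fun M N hM hMN _ => sq_mul_integral_norm_sub_sq_le μ a (by simpa using hM) hMN)
  rw [one_mul, show (1 + 1) * 2 ^ κ = 2 ^ (κ + 1) by ring] at h
  set I := ∫ x, dyadicEnergy (symmPartialSum a · x) κ 1 ∂μ
  set q := annulusMass (weightedCorrelation μ a) (2 ^ κ) (2 ^ (κ + 1))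
  have hI : 0 ≤ I := integral_nonneg fun x => dyadicEnergy_nonneg _ _ _
  have hq : 0 ≤ q := Finset.sum_nonneg fun p _ => weightedCorrelation_nonneg μ a p
  have hsq : ((κ : ℝ) + 1) ^ 2 ≤ 4 * κ ^ 2 := by
    have : (1 : ℝ) ≤ κ := by exact_mod_cast hκ
    nlinarith
  rw [integral_const_mul, Real.norm_of_nonneg (by positivity)]
  refine le_of_mul_le_mul_left ?_ (by positivity : (0 : ℝ) < (κ : ℝ) ^ 2)
  calc (κ : ℝ) ^ 2 * ((κ + 1) * I) = (κ + 1) * (κ ^ 2 * I) := by ring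
    _ ≤ (κ + 1) * ((κ + 1) * q) := by gcongr
    _ ≤ (κ : ℝ) ^ 2 * (4 * q) := by nlinarith [mul_le_mul_of_nonneg_right hsq hq]

end Fourier

/-- If `Σ_{n,m∈ℤ} |a_n||a_m||μ̂(n-m)| log₂(|n|+1) log₂(|m|+1) < ∞`, then the trigonometric
series `Σ_{n∈ℤ} a_n e^{2πinx}` converges `μ`-almost everywhere on the circle (in the sense
of symmetric partial sums). -/
theorem trigonometric_series_converges_ae
    (μ : Measure UnitAddCircle) [IsProbabilityMeasure μ] (a : ℤ → ℂ)
    (hL : ∑' (n : ℤ) (m : ℤ), ENNReal.ofReal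
        (‖a n‖ * ‖a m‖ * ‖∫ x, fourier (-(n - m)) x ∂μ‖ *
          Real.logb 2 (|(n : ℝ)| + 1) * Real.logb 2 (|(m : ℝ)| + 1)) < ⊤) :
    ∀ᵐ x ∂μ, ∃ l : ℂ,
      Tendsto (fun N : ℕ => ∑ n ∈ Finset.Icc (-(N : ℤ)) (N : ℤ), a n * fourier n x)
        atTop (nhds l) := by
  have hW : Summable (weightedCorrelation μ a) :=
    (ENNReal.summable_toReal (by rw [ENNReal.tsum_prod']; exact hL.ne)).congr fun p =>
      ENNReal.toReal_ofReal (weightedCorrelation_nonneg μ a p)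
  filter_upwards [ae_summable_sq_mul_norm_sub_sq μ a hW,
    ae_summable_succ_mul_dyadicEnergy μ a hW] with x hd hE
  exact exists_tendsto_of_summable_of_tendsto_dyadicEnergy
    (summable_of_summable_natCast_sq_mul_sq hd) hE.tendsto_atTop_zero
end
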